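/- arXiv:math/0310145 — 4 statements merged into one kernel-verified Lean document; each statement's English description precedes it below -/
import Mathlib

section
/- Let 0 < d₋ ≤ d₊ with d₋ ≤ 1, let a ∈ ℝ² be nonzero with |a| ≤ d₋/2, and let E be a compact subset of the annulus A(0,d₋,d₊) = {p : d₋ < |p| ≤ d₊}. Set α = min over p ∈ E of |⟨p, a⊥⟩/⟨p, a⟩|, where a⊥ is the rotation of a by 90 degrees. If α ≤ 1, then for all p ∈ E: 1/2 ≤ ⟨p−a, p+a⟩/(|p−a|·|p+a|) ≤ 1 − (9/(17·d₊²))·(|a|·α)². -/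
open MeasureTheory Metric Set Filter
open scoped RealInnerProductSpace ENNReal NNReal Topology

noncomputable section

abbrev E2 : Type := EuclideanSpace ℝ (Fin 2)

/-- Rotation of a planar vector by 90 degrees. -/
def perp (x : E2) : E2 := WithLp.toLp 2 ![-(x 1), x 0]

/-- The (half-open) annulus `B(x,dp) \ B(x,dm)` (closed balls). -/
def ann (x : E2) (dm dp : ℝ) : Set E2 := closedBall x dp \ closedBall x dm

/-- The open cone with vertex `x`, direction `u` and opening `σ`. -/
def cone (x u : E2) (σ : ℝ) : Set E2 := {y | |⟪y - x, perp u⟫| < σ * ⟪y - x, u⟫}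

lemma inner2 (x y : E2) : ⟪x, y⟫ = x 0 * y 0 + x 1 * y 1 := by
  simp [PiLp.inner_apply, Fin.sum_univ_two, RCLike.inner_apply]
  ring

lemma key_id (p a : E2) :
    ⟪p, a⟫ ^ 2 + ⟪p, perp a⟫ ^ 2 = ‖p‖ ^ 2 * ‖a‖ ^ 2 := by
  have h1 : ‖p‖ ^ 2 = p 0 * p 0 + p 1 * p 1 := by
    rw [← real_inner_self_eq_norm_sq, inner2]
  have h2 : ‖a‖ ^ 2 = a 0 * a 0 + a 1 * a 1 := by
    rw [← real_inner_self_eq_norm_sq, inner2]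
  have hperp0 : (perp a) 0 = -(a 1) := rfl
  have hperp1 : (perp a) 1 = a 0 := rfl
  rw [inner2, inner2, hperp0, hperp1, h1, h2]; ring

/-- Lower bound, pure real arithmetic. -/
lemma arith_low (s t N : ℝ) (ht0 : 0 < t) (h4t : 4 * t < s)
    (hN0 : 0 < N) (hNle : N ≤ s + t) : 1 / 2 ≤ (s - t) / N := by
  rw [le_div_iff₀ hN0]
  linarith

/-- Upper bound, pure real arithmetic. -/
lemma arith_up (dp s t u α c N : ℝ) (hdp : 0 < dp) (hs0 : 0 < s) (ht0 : 0 < t)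
    (hsd : s ≤ dp ^ 2) (h4t : 4 * t < s) (hα0 : 0 ≤ α) (hα1 : α ≤ 1)
    (huv : (1 + α ^ 2) * u ^ 2 ≤ s * t)
    (hN0 : 0 < N) (hN2 : N ^ 2 = (s + t) ^ 2 - 4 * u ^ 2)
    (hc_eq : c * (17 * dp ^ 2) = 9 * (t * α ^ 2)) (hc0 : 0 ≤ c) :
    (s - t) / N ≤ 1 - c := by
  have htdp : 4 * t ≤ dp ^ 2 := by nlinarith
  have h1a : (0:ℝ) ≤ 1 - α ^ 2 := by nlinarith
  have hc_small : c ≤ 9 / 68 := by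
    nlinarith [mul_nonneg ht0.le h1a, sq_nonneg dp]
  have h1c0 : (0:ℝ) ≤ 1 - c := by linarith
  rw [div_le_iff₀ hN0]
  have e1 : (1 + α ^ 2) * N ^ 2 = (1 + α ^ 2) * ((s + t) ^ 2 - 4 * u ^ 2) := by
    rw [hN2]
  have hM : (1 + α ^ 2) * (s - t) ^ 2 + 4 * s * t * α ^ 2 ≤ (1 + α ^ 2) * N ^ 2 := by
    linarith [e1, huv]
  have hM' : (1 + α ^ 2) * (s - t) ^ 2 + 4 * s * t * α ^ 2 ≤ 17 / 8 * s ^ 2 := by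
    linarith [mul_nonneg (sq_nonneg (s - t)) h1a,
      mul_nonneg (mul_nonneg hs0.le ht0.le) h1a,
      mul_nonneg (by linarith : (0:ℝ) ≤ s - 4 * t) (by linarith : (0:ℝ) ≤ s + 4 * t)]
  have hc_eq_s : c * (17 * dp ^ 2) * s = 9 * (t * α ^ 2) * s := by rw [hc_eq]
  have hcs : c * s ^ 2 ≤ 9 / 17 * (t * α ^ 2) * s := by
    linarith [hc_eq_s, mul_nonneg (mul_nonneg hc0 hs0.le) (sub_nonneg.mpr hsd)]
  have key2 : (1 + α ^ 2) * (s - t) ^ 2 ≤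
      (1 - 2 * c) * ((1 + α ^ 2) * (s - t) ^ 2 + 4 * s * t * α ^ 2) := by
    linarith [mul_nonneg hc0 (sub_nonneg.mpr hM'), hcs,
      mul_nonneg (mul_nonneg hs0.le ht0.le) (sq_nonneg α)]
  have hM'0 : (0:ℝ) ≤ (1 + α ^ 2) * (s - t) ^ 2 + 4 * s * t * α ^ 2 := by positivity
  have hfin2 : (1 + α ^ 2) * (s - t) ^ 2 ≤ (1 - c) ^ 2 * ((1 + α ^ 2) * N ^ 2) := by
    linarith [key2, mul_nonneg hM'0 (by nlinarith [sq_nonneg c] :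
      (0:ℝ) ≤ (1 - c) ^ 2 - (1 - 2 * c)),
      mul_nonneg (sq_nonneg (1 - c)) (sub_nonneg.mpr hM)]
  have hfin2' : (1 + α ^ 2) * (s - t) ^ 2 ≤ (1 + α ^ 2) * ((1 - c) * N) ^ 2 := by
    linarith [hfin2]
  have hKfin : (s - t) ^ 2 ≤ ((1 - c) * N) ^ 2 :=
    le_of_mul_le_mul_left hfin2' (by positivity)
  nlinarith [hKfin, mul_nonneg h1c0 hN0.le]

/-- Lemma 2.1: bounds on the cosine of the angle at points of a compact subset of an
annulus, seen from the two points `a` and `-a`. -/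
theorem stmt0 (dm dp : ℝ) (hdm : 0 < dm) (hddp : dm ≤ dp) (hdm1 : dm ≤ 1)
    (a : E2) (ha : a ≠ 0) (haa : ‖a‖ ≤ dm / 2)
    (E : Set E2) (hEc : IsCompact E) (hEA : E ⊆ ann 0 dm dp)
    (α : ℝ) (hα : IsLeast ((fun p => |⟪p, perp a⟫ / ⟪p, a⟫|) '' E) α)
    (hα1 : α ≤ 1) :
    ∀ p ∈ E,
      1 / 2 ≤ ⟪p - a, p + a⟫ / (‖p - a‖ * ‖p + a‖) ∧
      ⟪p - a, p + a⟫ / (‖p - a‖ * ‖p + a‖) ≤ 1 - 9 / (17 * dp ^ 2) * (‖a‖ * α) ^ 2 := by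
  obtain ⟨⟨q, hqE, hqα⟩, hlb⟩ := hα
  have hα0 : 0 ≤ α := hqα ▸ abs_nonneg _
  have hdp : 0 < dp := lt_of_lt_of_le hdm hddp
  intro p hp
  have hpann := hEA hp
  simp only [ann, mem_diff, mem_closedBall, dist_zero_right, not_le] at hpann
  obtain ⟨hpd, hpm⟩ := hpann
  have ha0 : 0 < ‖a‖ := norm_pos_iff.mpr ha
  -- basic identities
  have hST : ⟪p - a, p + a⟫ = ‖p‖ ^ 2 - ‖a‖ ^ 2 := by
    rw [inner_sub_left, inner_add_right, inner_add_right, real_inner_self_eq_norm_sq,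
      real_inner_self_eq_norm_sq, real_inner_comm a p]
    ring
  have hkey : ⟪p, a⟫ ^ 2 + ⟪p, perp a⟫ ^ 2 = ‖p‖ ^ 2 * ‖a‖ ^ 2 := key_id p a
  have hN2 : (‖p - a‖ * ‖p + a‖) ^ 2 = (‖p‖ ^ 2 + ‖a‖ ^ 2) ^ 2 - 4 * ⟪p, a⟫ ^ 2 := by
    have h1 := norm_sub_sq_real p a
    have h2 := norm_add_sq_real p a
    calc (‖p - a‖ * ‖p + a‖) ^ 2 = ‖p - a‖ ^ 2 * ‖p + a‖ ^ 2 := by ring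
      _ = _ := by rw [h1, h2]; ring
  have hαp : α ≤ |⟪p, perp a⟫ / ⟪p, a⟫| := hlb ⟨p, hp, rfl⟩
  -- abstract the real quantities
  set s := ‖p‖ ^ 2 with hs
  set t := ‖a‖ ^ 2 with ht
  set u := (⟪p, a⟫ : ℝ) with hudef
  set v := (⟪p, perp a⟫ : ℝ) with hvdef
  set N := ‖p - a‖ * ‖p + a‖ with hNdef
  have hN0 : 0 ≤ N := mul_nonneg (norm_nonneg _) (norm_nonneg _)
  have ht0 : 0 < t := by positivity
  have hs0 : 0 < s := by rw [hs]; nlinarith only [hpm, hdm]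
  have hsd : s ≤ dp ^ 2 := by rw [hs]; nlinarith only [norm_nonneg p, hpd, hdp.le]
  have h4t : 4 * t < s := by rw [hs, ht]; nlinarith only [haa, hpm, hdm, norm_nonneg a]
  clear_value s t u v N
  have huv : (1 + α ^ 2) * u ^ 2 ≤ s * t := by
    rcases eq_or_ne u 0 with h | h
    · rw [h]
      nlinarith only [sq_nonneg v, hkey]
    · have h1 : α * |u| ≤ |v| := by
        rw [abs_div] at hαp
        calc α * |u| ≤ (|v| / |u|) * |u| :=
              mul_le_mul_of_nonneg_right hαp (abs_nonneg u)
          _ = |v| := div_mul_cancel₀ _ (abs_ne_zero.mpr h)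
      nlinarith only [mul_self_le_mul_self (mul_nonneg hα0 (abs_nonneg u)) h1,
        sq_abs u, sq_abs v, hkey]
  have hNpos : 0 < N := by
    have hN2pos : 0 < N ^ 2 := by nlinarith only [hkey, sq_nonneg v, h4t, ht0, hN2]
    nlinarith only [hN2pos, hN0]
  have hNle : N ≤ s + t := by nlinarith only [hN2, sq_nonneg u, hN0, hs0.le, ht0.le]
  rw [hST]
  refine ⟨arith_low s t N ht0 h4t hNpos hNle, ?_⟩
  have hc_eq : (9 / (17 * dp ^ 2) * (‖a‖ * α) ^ 2) * (17 * dp ^ 2) = 9 * (t * α ^ 2) := by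
    rw [ht]
    field_simp
  have hc0 : 0 ≤ 9 / (17 * dp ^ 2) * (‖a‖ * α) ^ 2 := by positivity
  exact arith_up dp s t u α _ N hdp hs0 ht0 hsd h4t hα0 hα1 huv hNpos hN2 hc_eq hc0
end
end

section
/- Let p ∈ ℝ² \ {0} and σ, τ > 0. If u lies in the open cone V(0, p, σ) but not in the open cone V(p, −p, τ), then ⟨u − p, p/|p|⟩ ≥ −(σ/(σ+τ))·|p|. -/
open MeasureTheory Metric Set Filter
open scoped RealInnerProductSpace ENNReal NNReal Topology

noncomputable section

lemma perp_neg (p : E2) : perp (-p) = -perp p := by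
  ext i
  fin_cases i <;> simp [perp]

lemma inner_perp_self (p : E2) : ⟪p, perp p⟫ = 0 := by
  simp only [perp, PiLp.inner_apply, RCLike.inner_apply, conj_trivial, Fin.sum_univ_two, PiLp.toLp_apply,
    Matrix.cons_val_zero, Matrix.cons_val_one, Matrix.head_cons]
  ring

/-- Lemma 2.2: a point of the cone `V(0,p,σ)` outside the cone `V(p,-p,τ)` is not
too far behind `p` in the direction of `p`. -/
theorem stmt1 (p : E2) (hp : p ≠ 0) (σ τ : ℝ) (hσ : 0 < σ) (hτ : 0 < τ)
    (u : E2) (hu : u ∈ cone 0 p σ) (hu' : u ∉ cone p (-p) τ) :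
    ⟪u - p, ‖p‖⁻¹ • p⟫ ≥ -(σ / (σ + τ)) * ‖p‖ := by
  have hP : (0:ℝ) < ‖p‖ := norm_pos_iff.mpr hp
  set a := ⟪u, p⟫ with ha
  set b := ⟪u, perp p⟫ with hb
  have h1 : |b| < σ * a := by simpa [cone, hb, ha] using hu
  have h2 : τ * (‖p‖^2 - a) ≤ |b| := by
    have := hu'
    simp only [cone, Set.mem_setOf_eq, not_lt] at this
    have e1 : ⟪u - p, perp (-p)⟫ = -(b - ⟪p, perp p⟫) := by
      rw [perp_neg, inner_neg_right, inner_sub_left]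
    have e2 : ⟪u - p, -p⟫ = -(a - ‖p‖^2) := by
      rw [inner_neg_right, inner_sub_left, real_inner_self_eq_norm_sq]
    rw [e1, e2, inner_perp_self] at this
    simpa [abs_neg, mul_comm] using this
  have habs : 0 ≤ |b| := abs_nonneg b
  have key : τ * ‖p‖^2 < (σ + τ) * a := by nlinarith
  have hst : (0:ℝ) < σ + τ := by linarith
  have goal2 : a - ‖p‖^2 ≥ -(σ / (σ + τ)) * ‖p‖^2 := by
    have hd : σ / (σ + τ) * (σ + τ) = σ := div_mul_cancel₀ _ hst.ne'
    nlinarith [key, hst, hd]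
  have : ⟪u - p, ‖p‖⁻¹ • p⟫ = ‖p‖⁻¹ * (a - ‖p‖^2) := by
    rw [real_inner_smul_right, inner_sub_left, real_inner_self_eq_norm_sq]
  rw [this]
  have : -(σ / (σ + τ)) * ‖p‖ = ‖p‖⁻¹ * (-(σ / (σ + τ)) * ‖p‖^2) := by
    field_simp
  rw [this]
  exact mul_le_mul_of_nonneg_left goal2 (by positivity)
end
end

section
/- Fix s > 0 and 0 < d₋ ≤ d₊/2. Let ν be a Radon measure on ℝ² such that ν(B(u,r)) ≤ r^s for all u ∈ ℝ² and r > 0. Then there is a constant c > 0, depending only on d₋, d₊ and s, such that for every x ∈ ℝ² and every set V ⊆ ℝ², ν(V ∩ A(x,d₋,d₊)) ≤ c · (arc-diam_x(V ∩ A(x,d₋,d₊)))^{s−1}. -/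
open MeasureTheory Metric Set Filter
open scoped RealInnerProductSpace ENNReal NNReal Topology

noncomputable section

open Classical in
/-- The arc-diameter of `A` as seen from `x`: the length (angle in radians) of the
smallest arc of the unit circle centred at `x` containing the radial projection of `A`
(`2π` if `x ∈ A`).  An arc is described by a centre direction `v` and a half-width. -/
def arcDiam (x : E2) (A : Set E2) : ℝ :=
  if x ∈ A then 2 * Real.pi
  else sInf {θ : ℝ | 0 ≤ θ ∧
    ∃ v : E2, ‖v‖ = 1 ∧ ∀ u ∈ A, u ≠ x → InnerProductGeometry.angle (u - x) v ≤ θ / 2}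

/-- Two unit vectors are at distance at most their angle. -/
lemma norm_sub_le_angle {w v : E2} (hw : ‖w‖ = 1) (hv : ‖v‖ = 1) :
    ‖w - v‖ ≤ InnerProductGeometry.angle w v := by
  set α := InnerProductGeometry.angle w v with hα
  have hα0 : 0 ≤ α := InnerProductGeometry.angle_nonneg w v
  have hcos : Real.cos α = ⟪w, v⟫ := by
    rw [hα, InnerProductGeometry.cos_angle, hw, hv]; simp
  have hsq : ‖w - v‖ ^ 2 = 2 - 2 * Real.cos α := by
    rw [norm_sub_sq_real, hw, hv, hcos]; ring
  have hc2 : Real.cos α = 1 - 2 * Real.sin (α / 2) ^ 2 := by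
    have h1 := Real.cos_two_mul (α / 2)
    have h2 := Real.sin_sq_add_cos_sq (α / 2)
    rw [show 2 * (α / 2) = α by ring] at h1
    linarith
  have hsin : Real.sin (α / 2) ^ 2 ≤ (α / 2) ^ 2 := Real.sin_sq_le_sq
  nlinarith [norm_nonneg (w - v), sq_nonneg (‖w - v‖ - α), sq_nonneg (‖w - v‖ + α)]

lemma arcDiam_mem_aux (x : E2) (A : Set E2) :
    (2 * Real.pi) ∈ {θ : ℝ | 0 ≤ θ ∧
      ∃ v : E2, ‖v‖ = 1 ∧ ∀ u ∈ A, u ≠ x → InnerProductGeometry.angle (u - x) v ≤ θ / 2} := by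
  refine ⟨by positivity, EuclideanSpace.single 0 1, ?_, fun u _ _ => ?_⟩
  · simp [EuclideanSpace.norm_single]
  · have := InnerProductGeometry.angle_le_pi (u - x) (EuclideanSpace.single 0 1)
    linarith

lemma arcDiam_nonneg (x : E2) (A : Set E2) : 0 ≤ arcDiam x A := by
  unfold arcDiam; split
  · positivity
  · exact le_csInf ⟨_, arcDiam_mem_aux x A⟩ fun t ht => ht.1

lemma arcDiam_le_two_pi (x : E2) (A : Set E2) : arcDiam x A ≤ 2 * Real.pi := by
  unfold arcDiam; split
  · exact le_refl _
  · exact csInf_le ⟨0, fun t ht => ht.1⟩ (arcDiam_mem_aux x A)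

lemma arcDiam_spec (x : E2) (A : Set E2) (hx : x ∉ A) {θ' : ℝ} (h : arcDiam x A < θ') :
    ∃ v : E2, ‖v‖ = 1 ∧ ∀ u ∈ A, u ≠ x → InnerProductGeometry.angle (u - x) v ≤ θ' / 2 := by
  rw [arcDiam, if_neg hx] at h
  obtain ⟨t, ht, htlt⟩ := exists_lt_of_csInf_lt ⟨_, arcDiam_mem_aux x A⟩ h
  obtain ⟨v, hv, hang⟩ := ht.2
  exact ⟨v, hv, fun u hu hux => (hang u hu hux).trans (by linarith)⟩

/-- Lemma 2.3: mass of a piece of an annulus is controlled by its arc-diameter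
(with the convention `0 ^ (s-1) = ∞` for `s < 1`, as in extended nonnegative reals). -/
theorem stmt2 (s : ℝ) (hs : 0 < s) (dm dp : ℝ) (hdm : 0 < dm) (hdd : dm ≤ dp / 2)
    (ν : Measure E2) [ν.Regular]
    (hν : ∀ u : E2, ∀ r : ℝ, 0 < r → ν (closedBall u r) ≤ ENNReal.ofReal (r ^ s)) :
    ∃ c : ℝ, 0 < c ∧ ∀ x : E2, ∀ V : Set E2,
      ν (V ∩ ann x dm dp) ≤
        ENNReal.ofReal c * ENNReal.ofReal (arcDiam x (V ∩ ann x dm dp)) ^ (s - 1) := by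
  have hdp : 0 < dp := by linarith
  set c₁ := dp ^ s * (2 * Real.pi) ^ (1 - s) with hc₁def
  set c₂ := (2 * Real.pi + 2) * (3 * dp / 2) ^ s with hc₂def
  have hc₁0 : 0 < c₁ := by have := Real.pi_pos; positivity
  have hc₂0 : 0 < c₂ := by have := Real.pi_pos; positivity
  refine ⟨c₁ + c₂, by linarith, fun x V => ?_⟩
  set A := V ∩ ann x dm dp with hAdef
  set θ := arcDiam x A with hθdef
  have hxA : x ∉ A := fun hx => hx.2.2 (mem_closedBall_self hdm.le)
  have hθ0 : 0 ≤ θ := arcDiam_nonneg x A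
  have hθ2 : θ ≤ 2 * Real.pi := arcDiam_le_two_pi x A
  by_cases hs1 : s ≤ 1
  · -- easy case: `θ ^ (s-1)` is bounded below by `(2π) ^ (s-1)`
    have hAsub : A ⊆ closedBall x dp := fun y hy => hy.2.1
    have h1 : ν A ≤ ENNReal.ofReal (dp ^ s) := (measure_mono hAsub).trans (hν x dp hdp)
    have h2pi : (0 : ℝ) < 2 * Real.pi := by have := Real.pi_pos; linarith
    have key : ENNReal.ofReal (2 * Real.pi) ^ (s - 1) ≤ ENNReal.ofReal θ ^ (s - 1) := by
      rw [show s - 1 = -(1 - s) by ring, ENNReal.rpow_neg, ENNReal.rpow_neg]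
      exact ENNReal.inv_le_inv.mpr
        (ENNReal.rpow_le_rpow (ENNReal.ofReal_le_ofReal hθ2) (by linarith))
    have hone : ENNReal.ofReal (2 * Real.pi) ^ (1 - s) * ENNReal.ofReal (2 * Real.pi) ^ (s - 1)
        = 1 := by
      rw [← ENNReal.rpow_add _ _ (ENNReal.ofReal_pos.mpr h2pi).ne' ENNReal.ofReal_ne_top]
      norm_num
    calc ν A ≤ ENNReal.ofReal (dp ^ s) := h1
      _ = ENNReal.ofReal c₁ * ENNReal.ofReal (2 * Real.pi) ^ (s - 1) := by
          rw [hc₁def, ENNReal.ofReal_mul (by positivity),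
            ← ENNReal.ofReal_rpow_of_pos h2pi, mul_assoc, hone, mul_one]
      _ ≤ ENNReal.ofReal c₁ * ENNReal.ofReal θ ^ (s - 1) := mul_le_mul_right key _
      _ ≤ ENNReal.ofReal (c₁ + c₂) * ENNReal.ofReal θ ^ (s - 1) :=
          mul_le_mul_left (ENNReal.ofReal_le_ofReal (by linarith)) _
  · push_neg at hs1
    have claim : ∀ θ' : ℝ, θ < θ' → θ' < 2 * Real.pi + 1 →
        ν A ≤ ENNReal.ofReal c₂ * ENNReal.ofReal θ' ^ (s - 1) := by
      intro θ' hlt hub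
      have hθ'pos : 0 < θ' := lt_of_le_of_lt hθ0 hlt
      obtain ⟨v, hv, hang⟩ := arcDiam_spec x A hxA hlt
      set ρ := dp * θ' with hρdef
      have hρpos : 0 < ρ := mul_pos hdp hθ'pos
      set K := ⌊(dp - dm) / ρ⌋₊ with hKdef
      have cover : A ⊆ ⋃ k ∈ Finset.range (K + 1),
          closedBall (x + (dm + k * ρ) • v) (3 * ρ / 2) := by
        intro y hy
        have hrdp : dist y x ≤ dp := mem_closedBall.mp hy.2.1
        have hrdm : dm < dist y x := not_le.mp fun h => hy.2.2 (mem_closedBall.mpr h)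
        set r := dist y x with hrdef
        have hrpos : 0 < r := hdm.trans hrdm
        have hyx : y ≠ x := by
          intro h; rw [hrdef, h, dist_self] at hrpos; exact lt_irrefl _ hrpos
        set k := ⌊(r - dm) / ρ⌋₊ with hkdef
        have hkK : k ≤ K := Nat.floor_le_floor (by gcongr <;> linarith)
        have hfl : (k : ℝ) ≤ (r - dm) / ρ :=
          Nat.floor_le (div_nonneg (by linarith) hρpos.le)
        have hfl2 : (r - dm) / ρ < k + 1 := Nat.lt_floor_add_one _
        have h1 : dm + k * ρ ≤ r := by
          have := (le_div_iff₀ hρpos).mp hfl; linarith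
        have h2 : r < dm + k * ρ + ρ := by
          have := (div_lt_iff₀ hρpos).mp hfl2; linarith
        have hnyx : ‖y - x‖ = r := by rw [hrdef, dist_eq_norm]
        set w := r⁻¹ • (y - x) with hwdef
        have hwn : ‖w‖ = 1 := by
          rw [hwdef, norm_smul, hnyx, norm_inv, Real.norm_eq_abs, abs_of_pos hrpos]
          field_simp
        have hyxw : y - x = r • w := by
          rw [hwdef, smul_smul, mul_inv_cancel₀ hrpos.ne', one_smul]
        have hangw : InnerProductGeometry.angle w v ≤ θ' / 2 := by
          have h := hang y hy hyx
          rwa [hwdef, InnerProductGeometry.angle_smul_left_of_pos _ _ (inv_pos.mpr hrpos)]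
        have hnwv : ‖w - v‖ ≤ θ' / 2 := (norm_sub_le_angle hwn hv).trans hangw
        refine mem_biUnion (Finset.mem_range.mpr (Nat.lt_succ_of_le hkK)) ?_
        rw [mem_closedBall, dist_eq_norm]
        have hdecomp : y - (x + (dm + k * ρ) • v)
            = (y - x - r • v) + (r - (dm + k * ρ)) • v := by
          rw [sub_smul]; abel
        calc ‖y - (x + (dm + k * ρ) • v)‖
            = ‖(y - x - r • v) + (r - (dm + k * ρ)) • v‖ := by rw [hdecomp]
          _ ≤ ‖y - x - r • v‖ + ‖(r - (dm + k * ρ)) • v‖ := norm_add_le _ _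
          _ = r * ‖w - v‖ + |r - (dm + k * ρ)| := by
              rw [hyxw, ← smul_sub, norm_smul, norm_smul, hv, mul_one,
                Real.norm_eq_abs, Real.norm_eq_abs, abs_of_pos hrpos]
          _ ≤ dp * (θ' / 2) + ρ := by
              have hb : |r - (dm + k * ρ)| ≤ ρ := abs_le.mpr ⟨by linarith, by linarith⟩
              have : r * ‖w - v‖ ≤ dp * (θ' / 2) :=
                mul_le_mul hrdp hnwv (norm_nonneg _) hdp.le
              linarith
          _ ≤ 3 * ρ / 2 := by rw [hρdef]; linarith
      have hsum : ν A ≤ (K + 1 : ℕ) * ENNReal.ofReal ((3 * ρ / 2) ^ s) := by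
        calc ν A ≤ ν (⋃ k ∈ Finset.range (K + 1),
              closedBall (x + (dm + k * ρ) • v) (3 * ρ / 2)) := measure_mono cover
          _ ≤ ∑ k ∈ Finset.range (K + 1),
              ν (closedBall (x + (dm + k * ρ) • v) (3 * ρ / 2)) :=
            measure_biUnion_finset_le _ _
          _ ≤ ∑ _k ∈ Finset.range (K + 1), ENNReal.ofReal ((3 * ρ / 2) ^ s) :=
            Finset.sum_le_sum fun k _ => hν _ _ (by positivity)
          _ = (K + 1 : ℕ) * ENNReal.ofReal ((3 * ρ / 2) ^ s) := by
            rw [Finset.sum_const, Finset.card_range, nsmul_eq_mul]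
      have hKb : ((K + 1 : ℕ) : ℝ≥0∞) ≤ ENNReal.ofReal (1 / θ' + 1) := by
        rw [← ENNReal.ofReal_natCast]
        apply ENNReal.ofReal_le_ofReal
        have h1 : (K : ℝ) ≤ (dp - dm) / ρ :=
          Nat.floor_le (div_nonneg (by linarith) hρpos.le)
        have h2 : (dp - dm) / ρ ≤ 1 / θ' := by
          rw [hρdef, div_le_div_iff₀ hρpos hθ'pos]; nlinarith
        push_cast; linarith
      have realineq : (1 / θ' + 1) * (3 * ρ / 2) ^ s ≤ c₂ * θ' ^ (s - 1) := by
        have e1 : (3 * ρ / 2) ^ s = (3 * dp / 2) ^ s * θ' ^ s := by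
          rw [hρdef, show 3 * (dp * θ') / 2 = 3 * dp / 2 * θ' by ring,
            Real.mul_rpow (by positivity) hθ'pos.le]
        have e2 : θ' ^ s = θ' ^ (s - 1) * θ' := by
          rw [← Real.rpow_add_one hθ'pos.ne' (s - 1), sub_add_cancel]
        have hp : (0 : ℝ) ≤ θ' ^ (s - 1) := Real.rpow_nonneg hθ'pos.le _
        have hq : (0 : ℝ) ≤ (3 * dp / 2) ^ s := Real.rpow_nonneg (by positivity) _
        have key : (1 / θ' + 1) * (3 * ρ / 2) ^ s
            = (3 * dp / 2) ^ s * (θ' ^ (s - 1) * (1 + θ')) := by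
          rw [e1, e2]; field_simp
        rw [key, hc₂def]
        have h1θ : 1 + θ' ≤ 2 * Real.pi + 2 := by linarith
        nlinarith [mul_nonneg hq hp]
      calc ν A ≤ (K + 1 : ℕ) * ENNReal.ofReal ((3 * ρ / 2) ^ s) := hsum
        _ ≤ ENNReal.ofReal (1 / θ' + 1) * ENNReal.ofReal ((3 * ρ / 2) ^ s) :=
            mul_le_mul_left hKb _
        _ = ENNReal.ofReal ((1 / θ' + 1) * (3 * ρ / 2) ^ s) :=
            (ENNReal.ofReal_mul (by positivity)).symm
        _ ≤ ENNReal.ofReal (c₂ * θ' ^ (s - 1)) := ENNReal.ofReal_le_ofReal realineq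
        _ = ENNReal.ofReal c₂ * ENNReal.ofReal θ' ^ (s - 1) := by
            rw [ENNReal.ofReal_mul hc₂0.le, ENNReal.ofReal_rpow_of_pos hθ'pos]
    -- pass to the limit θ' → θ⁺
    have cont : Tendsto (fun ε : ℝ => ENNReal.ofReal (c₁ + c₂)
          * ENNReal.ofReal (θ + ε) ^ (s - 1)) (𝓝[>] (0 : ℝ))
        (𝓝 (ENNReal.ofReal (c₁ + c₂) * ENNReal.ofReal θ ^ (s - 1))) := by
      have hcont : ContinuousAt (fun ε : ℝ => ENNReal.ofReal (c₁ + c₂)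
          * ENNReal.ofReal (θ + ε) ^ (s - 1)) 0 := by
        have h1 : Continuous fun ε : ℝ => ENNReal.ofReal (θ + ε) ^ (s - 1) :=
          ENNReal.continuous_rpow_const.comp
            (ENNReal.continuous_ofReal.comp (continuous_const.add continuous_id))
        exact ((ENNReal.continuous_const_mul ENNReal.ofReal_ne_top).comp h1).continuousAt
      have := hcont.tendsto.mono_left (nhdsWithin_le_nhds (s := Set.Ioi (0:ℝ)))
      simpa using this
    refine ge_of_tendsto cont ?_
    filter_upwards [Ioo_mem_nhdsGT_of_mem (by constructor <;> norm_num :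
      (0 : ℝ) ∈ Ico (0 : ℝ) 1)] with ε hε
    have hπ := Real.pi_pos
    have h := claim (θ + ε) (by linarith [hε.1]) (by linarith [hε.2])
    exact h.trans (mul_le_mul_left (ENNReal.ofReal_le_ofReal (by linarith)) _)
end
end

section
/- Let f, g be unit vectors in ℝ² with ⟨f,g⟩ > 0, let d₋ > 0 and 0 < ρ ≤ d₋/4, and suppose |⟨f, g⊥⟩| ≤ ρ/d₋. Then for any y ∈ ℝ², the open cone V(y, f, ρ/d₋) is contained in the open cone V(y, g, 4ρ/d₋). -/
open MeasureTheory Metric Set Filter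
open scoped RealInnerProductSpace ENNReal NNReal Topology

noncomputable section

lemma key (a b c s σ : ℝ) (hσ : 0 < σ) (hσ4 : σ ≤ 1/4) (hc : 0 < c)
    (hcs : c^2 + s^2 = 1) (hs : |s| ≤ σ) (hb : |b| < σ * a) :
    |a*s + b*c| < 4*σ*(a*c - b*s) := by
  obtain ⟨hb1, hb2⟩ := abs_lt.1 hb
  obtain ⟨hs1, hs2⟩ := abs_le.1 hs
  have ha : 0 < a := by nlinarith [abs_nonneg b]
  have hc7 : (7:ℝ)/8 < c := by nlinarith
  have hkey : 0 < 3*c - 1 - 4*σ^2 := by nlinarith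
  rw [abs_lt]
  constructor <;>
    nlinarith [mul_pos (sub_pos.2 hb2) hc, mul_pos (show (0:ℝ) < σ*a + b by linarith) hc,
      mul_nonneg (sub_pos.2 hb2).le (sub_nonneg.2 hs2),
      mul_nonneg (show (0:ℝ) ≤ σ*a + b by linarith) (show (0:ℝ) ≤ σ + s by linarith),
      mul_nonneg (sub_pos.2 hb2).le (show (0:ℝ) ≤ σ + s by linarith),
      mul_nonneg (show (0:ℝ) ≤ σ*a + b by linarith) (sub_nonneg.2 hs2),
      mul_nonneg ha.le (sub_nonneg.2 hs2), mul_nonneg ha.le (show (0:ℝ) ≤ σ + s by linarith),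
      mul_pos (mul_pos hσ ha) hkey]

/-- Observation 2 in the proof of Proposition 2.7: if unit vectors `f` and `g` make a
small angle (`|⟨f,g⊥⟩| ≤ ρ/d₋`, `⟨f,g⟩ > 0`) then the narrow cone in direction `f` is
contained in the wider cone in direction `g`. -/
theorem stmt17 (f g : E2) (hf : ‖f‖ = 1) (hg : ‖g‖ = 1) (hfg : 0 < ⟪f, g⟫)
    (dm ρ : ℝ) (hdm : 0 < dm) (hρ : 0 < ρ) (hρ4 : ρ ≤ dm / 4)
    (hperp : |⟪f, perp g⟫| ≤ ρ / dm) :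
    ∀ y : E2, cone y f (ρ / dm) ⊆ cone y g (4 * ρ / dm) := by
  have hf2 : f 0 ^ 2 + f 1 ^ 2 = 1 := by
    have := real_inner_self_eq_norm_sq f
    simp only [PiLp.inner_apply, RCLike.inner_apply, conj_trivial, Fin.sum_univ_two, hf] at this
    nlinarith [this]
  have hg2 : g 0 ^ 2 + g 1 ^ 2 = 1 := by
    have := real_inner_self_eq_norm_sq g
    simp only [PiLp.inner_apply, RCLike.inner_apply, conj_trivial, Fin.sum_univ_two, hg] at this
    nlinarith [this]
  simp only [cone, perp, Set.mem_setOf_eq, PiLp.inner_apply, RCLike.inner_apply, conj_trivial,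
    Fin.sum_univ_two, Matrix.cons_val_zero, Matrix.cons_val_one, Matrix.head_cons,
    PiLp.sub_apply, PiLp.toLp_apply] at hfg hperp ⊢
  intro y z hz
  simp only [Set.mem_setOf_eq] at hz ⊢
  set p := z 0 - y 0
  set q := z 1 - y 1
  set c := f 0 * g 0 + f 1 * g 1 with hcdef
  set s := f 0 * -g 1 + f 1 * g 0 with hsdef
  set a := p * f 0 + q * f 1 with hadef
  set b := p * -f 1 + q * f 0 with hbdef
  have hσ : (0:ℝ) < ρ / dm := div_pos hρ hdm
  have hσ4 : ρ / dm ≤ 1/4 := by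
    rw [div_le_div_iff₀ hdm (by norm_num)]; linarith
  have hcs : c ^ 2 + s ^ 2 = 1 := by
    have : c ^ 2 + s ^ 2 = (f 0 ^ 2 + f 1 ^ 2) * (g 0 ^ 2 + g 1 ^ 2) := by
      rw [hcdef, hsdef]; ring
    rw [this, hf2, hg2]; norm_num
  have hkey := key a b c s (ρ / dm) hσ hσ4
    (by rw [hcdef]; ring_nf; ring_nf at hfg; linarith) hcs
    (by convert hperp using 2; ring) (by convert hz using 3 <;> ring)
  have e1 : p * -g 1 + q * g 0 = a * s + b * c := by
    have : (a * s + b * c) = (p * -g 1 + q * g 0) * (f 0 ^ 2 + f 1 ^ 2) := by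
      rw [hadef, hbdef, hcdef, hsdef]; ring
    rw [this, hf2]; ring
  have e2 : p * g 0 + q * g 1 = a * c - b * s := by
    have : (a * c - b * s) = (p * g 0 + q * g 1) * (f 0 ^ 2 + f 1 ^ 2) := by
      rw [hadef, hbdef, hcdef, hsdef]; ring
    rw [this, hf2]; ring
  rw [show -g 1 * p + g 0 * q = p * -g 1 + q * g 0 by ring,
    show g 0 * p + g 1 * q = p * g 0 + q * g 1 by ring]
  rw [e1, e2]
  calc |a * s + b * c| < 4 * (ρ / dm) * (a * c - b * s) := hkey
    _ = 4 * ρ / dm * (a * c - b * s) := by ring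
end
end
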